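/- arXiv:2408.09364 — 5 statements merged into one kernel-verified Lean document; each statement's English description precedes it below -/
import Mathlib

section
/- For every real α > 0 and every h ∈ C₀([0,∞)), the function G⁰_α h is twice continuously differentiable on (0,∞) and satisfies (1/2)·(G⁰_α h)''(x) = α·G⁰_α h(x) − h(x) for every x ∈ (0,∞). -/
open MeasureTheory Real Filter Topology

/-- The resolvent density of killed Brownian motion on `(0,∞)`. -/
noncomputable def g0 (α x y : ℝ) : ℝ :=
  (2 / Real.sqrt (2 * α)) * Real.sinh (Real.sqrt (2 * α) * min x y) *
    Real.exp (-(Real.sqrt (2 * α) * max x y))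

/-- The resolvent `G⁰_α h` of killed Brownian motion on `(0,∞)`. -/
noncomputable def G0 (α : ℝ) (h : ℝ → ℝ) (x : ℝ) : ℝ :=
  ∫ y in Set.Ioi (0 : ℝ), g0 α x y * h y

/-- `h ∈ C₀([0,∞))`: continuous on `[0,∞)` and vanishing at infinity. -/
def MemC0 (h : ℝ → ℝ) : Prop :=
  ContinuousOn h (Set.Ici 0) ∧ Filter.Tendsto h Filter.atTop (nhds 0)

/-!
Splitting the kernel at `y = x` and writing `c = √(2α)`,
`G⁰_α h x = (2/c) (e^{-cx} ∫₀ˣ sinh(cy) h(y) dy + sinh(cx) ∫ₓ^∞ e^{-cy} h(y) dy)`,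
the tail being integrable because `h` is bounded. This is variation of parameters for
`u'' = c² u` with the solutions `e^{-cx}` and `sinh(cx)`: by the fundamental theorem of calculus
the `h`-terms cancel in the first derivative, and in the second they add up to `-2h` because
`e^{-cx} (sinh(cx) + cosh(cx)) = 1`, i.e. the Wronskian of the two solutions is `c`.
-/

open Set Bornology

theorem ContinuousOn.isBounded_image_Ici_of_tendsto {E : Type*} [PseudoMetricSpace E]
    {f : ℝ → E} {a : ℝ} {l : E} (hf : ContinuousOn f (Ici a)) (hlim : Tendsto f atTop (𝓝 l)) :
    IsBounded (f '' Ici a) := by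
  obtain ⟨s, hs, hbdd⟩ := Metric.exists_isBounded_image_of_tendsto hlim
  obtain ⟨N, hN⟩ := mem_atTop_sets.mp hs
  have hcpt : IsBounded (f '' Icc a N) :=
    (isCompact_Icc.image_of_continuousOn (hf.mono Icc_subset_Ici_self)).isBounded
  refine (hcpt.union hbdd).subset ?_
  rintro _ ⟨y, hy, rfl⟩
  rcases le_or_gt y N with hyN | hyN
  · exact Or.inl ⟨y, ⟨hy, hyN⟩, rfl⟩
  · exact Or.inr ⟨y, hN y hyN.le, rfl⟩

theorem integrableOn_exp_neg_mul_mul_of_isBounded {c a : ℝ} {h : ℝ → ℝ} (hc : 0 < c)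
    (hh : ContinuousOn h (Ici a)) (hb : IsBounded (h '' Ici a)) :
    IntegrableOn (fun y => exp (-(c * y)) * h y) (Ioi a) := by
  obtain ⟨M, hM⟩ := isBounded_iff_forall_norm_le.mp hb
  have hexp : IntegrableOn (fun y => exp (-(c * y))) (Ioi a) := by
    simpa only [neg_mul] using exp_neg_integrableOn_Ioi a hc
  refine hexp.mul_bdd (c := M)
    ((hh.mono Ioi_subset_Ici_self).aestronglyMeasurable measurableSet_Ioi) ?_
  filter_upwards [ae_restrict_mem measurableSet_Ioi] with y hy
  exact hM _ (mem_image_of_mem h (mem_Ici_of_Ioi hy))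

section Calculus

variable {E : Type*} [NormedAddCommGroup E] [NormedSpace ℝ E] [CompleteSpace E]

theorem ContinuousOn.hasDerivAt_intervalIntegral_right {f : ℝ → E} {a x : ℝ}
    (hf : ContinuousOn f (Ici a)) (hx : a < x) :
    HasDerivAt (fun t => ∫ y in a..t, f y) (f x) x :=
  intervalIntegral.integral_hasDerivAt_right
    ((hf.mono Icc_subset_Ici_self).intervalIntegrable_of_Icc hx.le)
    ((hf.mono Ioi_subset_Ici_self).stronglyMeasurableAtFilter isOpen_Ioi x hx)
    (hf.continuousAt (Ici_mem_nhds hx))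

theorem ContinuousOn.hasDerivAt_integral_Ioi {f : ℝ → E} {a x : ℝ}
    (hf : ContinuousOn f (Ici a)) (hfi : IntegrableOn f (Ioi a)) (hx : a < x) :
    HasDerivAt (fun t => ∫ y in Ioi t, f y) (-f x) x := by
  have htail : (fun t => (∫ y in Ioi a, f y) - ∫ y in a..t, f y) =ᶠ[𝓝 x]
      fun t => ∫ y in Ioi t, f y := by
    filter_upwards [Ioi_mem_nhds hx] with t ht
    rw [← intervalIntegral.integral_Ioi_sub_Ioi hfi ht.le, sub_sub_cancel]
  exact ((hf.hasDerivAt_intervalIntegral_right hx).const_sub _).congr_of_eventuallyEq htail.symm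

end Calculus

section TwiceDifferentiable

variable {𝕜 : Type*} [NontriviallyNormedField 𝕜] {E : Type*} [NormedAddCommGroup E]
  [NormedSpace 𝕜 E] {f f' f'' : 𝕜 → E} {s : Set 𝕜}

theorem contDiffOn_two_of_hasDerivAt (hs : IsOpen s) (hf : ∀ x ∈ s, HasDerivAt f (f' x) x)
    (hf' : ∀ x ∈ s, HasDerivAt f' (f'' x) x) (hf'' : ContinuousOn f'' s) :
    ContDiffOn 𝕜 2 f s := by
  have hd : EqOn (deriv f) f' s := fun x hx => (hf x hx).deriv
  have hd' : EqOn (deriv f') f'' s := fun x hx => (hf' x hx).deriv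
  rw [show (2 : WithTop ℕ∞) = 1 + 1 from rfl, contDiffOn_succ_iff_deriv_of_isOpen hs]
  refine ⟨fun x hx => (hf x hx).differentiableAt.differentiableWithinAt, by simp, ?_⟩
  refine ContDiffOn.congr ?_ hd
  rw [show (1 : WithTop ℕ∞) = 0 + 1 from rfl, contDiffOn_succ_iff_deriv_of_isOpen hs]
  refine ⟨fun x hx => (hf' x hx).differentiableAt.differentiableWithinAt, by simp, ?_⟩
  exact contDiffOn_zero.mpr (hf''.congr hd')

theorem deriv_deriv_eq_of_hasDerivAt (hs : IsOpen s) (hf : ∀ x ∈ s, HasDerivAt f (f' x) x)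
    (hf' : ∀ x ∈ s, HasDerivAt f' (f'' x) x) {x : 𝕜} (hx : x ∈ s) :
    deriv (deriv f) x = f'' x := by
  have hd : deriv f =ᶠ[𝓝 x] f' := by
    filter_upwards [hs.mem_nhds hx] with y hy using (hf y hy).deriv
  rw [hd.deriv_eq, (hf' x hx).deriv]

end TwiceDifferentiable

section GreenFormula

variable {c x : ℝ} {h A T : ℝ → ℝ}

noncomputable def greenSum (c : ℝ) (A T : ℝ → ℝ) (x : ℝ) : ℝ :=
  2 / c * (exp (-(c * x)) * A x + sinh (c * x) * T x)

noncomputable def greenSumDeriv (c : ℝ) (A T : ℝ → ℝ) (x : ℝ) : ℝ :=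
  2 * (-exp (-(c * x)) * A x + cosh (c * x) * T x)

theorem hasDerivAt_greenSum (hc : c ≠ 0) (hA : HasDerivAt A (sinh (c * x) * h x) x)
    (hT : HasDerivAt T (-(exp (-(c * x)) * h x)) x) :
    HasDerivAt (greenSum c A T) (greenSumDeriv c A T x) x := by
  have hexp : HasDerivAt (fun x => exp (-(c * x))) (exp (-(c * x)) * -c) x := by
    simpa using ((hasDerivAt_id x).const_mul c).neg.exp
  have hsinh : HasDerivAt (fun x => sinh (c * x)) (cosh (c * x) * c) x := by
    simpa using ((hasDerivAt_id x).const_mul c).sinh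
  refine (((hexp.mul hA).add (hsinh.mul hT)).const_mul (2 / c)).congr_deriv ?_
  simp only [greenSumDeriv]
  field_simp
  ring

theorem hasDerivAt_greenSumDeriv (hA : HasDerivAt A (sinh (c * x) * h x) x)
    (hT : HasDerivAt T (-(exp (-(c * x)) * h x)) x) :
    HasDerivAt (greenSumDeriv c A T) (c ^ 2 * greenSum c A T x - 2 * h x) x := by
  have hexp : HasDerivAt (fun x => -exp (-(c * x))) (exp (-(c * x)) * c) x := by
    simpa using ((hasDerivAt_id x).const_mul c).neg.exp.fun_neg
  have hcosh : HasDerivAt (fun x => cosh (c * x)) (sinh (c * x) * c) x := by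
    simpa using ((hasDerivAt_id x).const_mul c).cosh
  have hWronskian : exp (-(c * x)) * (sinh (c * x) + cosh (c * x)) = 1 := by
    rw [sinh_add_cosh, ← exp_add, neg_add_cancel, exp_zero]
  refine (((hexp.mul hA).add (hcosh.mul hT)).const_mul 2).congr_deriv ?_
  simp only [greenSum]
  field_simp
  linear_combination (-h x) * hWronskian

end GreenFormula

theorem g0_of_le {α x y : ℝ} (hyx : y ≤ x) :
    g0 α x y = 2 / √(2 * α) * exp (-(√(2 * α) * x)) * sinh (√(2 * α) * y) := by
  rw [g0, min_eq_right hyx, max_eq_left hyx]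
  ring

theorem g0_of_ge {α x y : ℝ} (hxy : x ≤ y) :
    g0 α x y = 2 / √(2 * α) * sinh (√(2 * α) * x) * exp (-(√(2 * α) * y)) := by
  rw [g0, min_eq_left hxy, max_eq_right hxy]

theorem G0_eq_greenSum {α x : ℝ} {h : ℝ → ℝ} (hx : 0 < x)
    (hA : IntegrableOn (fun y => sinh (√(2 * α) * y) * h y) (Ioc 0 x))
    (hT : IntegrableOn (fun y => exp (-(√(2 * α) * y)) * h y) (Ioi x)) :
    G0 α h x = greenSum (√(2 * α)) (fun t => ∫ y in 0..t, sinh (√(2 * α) * y) * h y)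
      (fun t => ∫ y in Ioi t, exp (-(√(2 * α) * y)) * h y) x := by
  set c := √(2 * α)
  have hleft : EqOn (fun y => g0 α x y * h y)
      (fun y => 2 / c * exp (-(c * x)) * (sinh (c * y) * h y)) (Ioc 0 x) := fun y hy => by
    simp only [g0_of_le hy.2]
    ring
  have hright : EqOn (fun y => g0 α x y * h y)
      (fun y => 2 / c * sinh (c * x) * (exp (-(c * y)) * h y)) (Ioi x) := fun y hy => by
    simp only [g0_of_ge (le_of_lt hy)]
    ring
  rw [G0, ← Ioc_union_Ioi_eq_Ioi hx.le, setIntegral_union Ioc_disjoint_Ioi_same measurableSet_Ioi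
    (IntegrableOn.congr_fun (hA.const_mul _) hleft.symm measurableSet_Ioc)
    (IntegrableOn.congr_fun (hT.const_mul _) hright.symm measurableSet_Ioi),
    setIntegral_congr_fun measurableSet_Ioc hleft, setIntegral_congr_fun measurableSet_Ioi hright,
    integral_const_mul, integral_const_mul]
  simp only [greenSum, intervalIntegral.integral_of_le hx.le]
  ring

/-- For `α > 0` and `h ∈ C₀([0,∞))`, the function `G⁰_α h` is twice continuously
differentiable on `(0,∞)` and `(1/2)·(G⁰_α h)'' = α·G⁰_α h − h` there. -/
theorem stmt0 (α : ℝ) (hα : 0 < α) (h : ℝ → ℝ) (hh : MemC0 h) :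
    ContDiffOn ℝ 2 (G0 α h) (Set.Ioi 0) ∧
      ∀ x ∈ Set.Ioi (0 : ℝ),
        (1 / 2) * deriv (deriv (G0 α h)) x = α * G0 α h x - h x := by
  obtain ⟨hcont, hlim⟩ := hh
  set c := √(2 * α)
  have hc : 0 < c := by positivity
  have hφ : ContinuousOn (fun y => sinh (c * y) * h y) (Ici 0) := by fun_prop
  have hψ : ContinuousOn (fun y => exp (-(c * y)) * h y) (Ici 0) := by fun_prop
  have hψi : IntegrableOn (fun y => exp (-(c * y)) * h y) (Ioi 0) :=
    integrableOn_exp_neg_mul_mul_of_isBounded hc hcont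
      (hcont.isBounded_image_Ici_of_tendsto hlim)
  set A := fun t => ∫ y in 0..t, sinh (c * y) * h y
  set T := fun t => ∫ y in Ioi t, exp (-(c * y)) * h y
  have hGF : EqOn (G0 α h) (greenSum c A T) (Ioi 0) := fun x hx =>
    G0_eq_greenSum hx ((hφ.mono Icc_subset_Ici_self).integrableOn_Icc.mono_set Ioc_subset_Icc_self)
      (hψi.mono_set (Ioi_subset_Ioi (le_of_lt hx)))
  have hA x (hx : x ∈ Ioi (0 : ℝ)) := hφ.hasDerivAt_intervalIntegral_right hx
  have hT x (hx : x ∈ Ioi (0 : ℝ)) := hψ.hasDerivAt_integral_Ioi hψi hx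
  have hG' : ∀ x ∈ Ioi (0 : ℝ), HasDerivAt (G0 α h) (greenSumDeriv c A T x) x := fun x hx =>
    (hasDerivAt_greenSum hc.ne' (hA x hx) (hT x hx)).congr_of_eventuallyEq
      (eventually_of_mem (isOpen_Ioi.mem_nhds hx) hGF)
  have hG'' : ∀ x ∈ Ioi (0 : ℝ),
      HasDerivAt (greenSumDeriv c A T) (2 * α * G0 α h x - 2 * h x) x := fun x hx => by
    rw [hGF hx, ← sq_sqrt (by positivity : (0 : ℝ) ≤ 2 * α)]
    exact hasDerivAt_greenSumDeriv (hA x hx) (hT x hx)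
  have hcont'' : ContinuousOn (fun x => 2 * α * G0 α h x - 2 * h x) (Ioi 0) :=
    (continuousOn_const.mul fun x hx => (hG' x hx).continuousAt.continuousWithinAt).sub
      (continuousOn_const.mul (hcont.mono Ioi_subset_Ici_self))
  refine ⟨contDiffOn_two_of_hasDerivAt isOpen_Ioi hG' hG'' hcont'', fun x hx => ?_⟩
  rw [deriv_deriv_eq_of_hasDerivAt isOpen_Ioi hG' hG'' hx]
  ring
end

section
/- For every real α > 0 and every h ∈ C₀([0,∞)), the function G⁰_α h is differentiable on (0,∞) with (√(2α)/2)·(G⁰_α h)'(x) = −√(2α)·e^{−√(2α)x}·∫₀ˣ sinh(√(2α)y)·h(y) dy + √(2α)·cosh(√(2α)x)·∫ₓ^∞ e^{−√(2α)y}·h(y) dy for all x > 0, and consequently lim_{x→0⁺} (G⁰_α h)'(x) = 2·∫₀^∞ h(y)·e^{−√(2α)y} dy. -/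
/-!
For `x > 0` the kernel splits at `y = x`, so with `c = √(2α)`
`G⁰_α h(x) = (2/c)·(e^{-cx}·∫₀ˣ sinh(cy) h(y) dy + sinh(cx)·∫ₓ^∞ e^{-cy} h(y) dy)`.
Differentiating by the product rule and the fundamental theorem of calculus, the two terms
`±(2/c)·e^{-cx} sinh(cx) h(x)` cancel, leaving
`2·(cosh(cx)·∫ₓ^∞ e^{-cy} h - e^{-cx}·∫₀ˣ sinh(cy) h)`.
As `x → 0⁺` the first integral tends to `∫₀^∞ e^{-cy} h` and the second to `0`.
-/

open MeasureTheory Real Filter Topology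

open Set

section Primitives

variable {E : Type*} [NormedAddCommGroup E] [NormedSpace ℝ E] {f : ℝ → E} {a x : ℝ}

lemma tendsto_setIntegral_Ioc_nhdsGT {b : ℝ} (hab : a < b) (hf : IntegrableOn f (Icc a b)) :
    Tendsto (fun t => ∫ y in Ioc a t, f y) (𝓝[>] a) (𝓝 0) := by
  have hcont := (intervalIntegral.continuousOn_primitive hf a (left_mem_Icc.2 hab.le)).mono
    Ioo_subset_Icc_self
  simpa [nhdsWithin_Ioo_eq_nhdsGT hab] using hcont.tendsto

variable [CompleteSpace E]

lemma hasDerivAt_setIntegral_Ioc (hf : ContinuousOn f (Ici a)) (hx : a < x) :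
    HasDerivAt (fun t => ∫ y in Ioc a t, f y) (f x) x := by
  have hnhds : Ioi a ∈ 𝓝 x := Ioi_mem_nhds hx
  have hf' : ContinuousOn f (Ioi a) := hf.mono Ioi_subset_Ici_self
  have hint : IntervalIntegrable f volume a x :=
    (hf.mono Icc_subset_Ici_self).intervalIntegrable_of_Icc hx.le
  refine (intervalIntegral.integral_hasDerivAt_right hint
    ⟨Ioi a, hnhds, hf'.aestronglyMeasurable measurableSet_Ioi⟩
    (hf'.continuousAt hnhds)).congr_of_eventuallyEq ?_
  filter_upwards [hnhds] with t ht
  exact (intervalIntegral.integral_of_le (le_of_lt ht)).symm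

lemma hasDerivAt_setIntegral_Ioi (hf : ContinuousOn f (Ici a)) (hfi : IntegrableOn f (Ioi a))
    (hx : a < x) : HasDerivAt (fun t => ∫ y in Ioi t, f y) (-f x) x := by
  have hsplit : ∀ t, a ≤ t → ∫ y in Ioi t, f y = (∫ y in Ioi a, f y) - ∫ y in Ioc a t, f y :=
    fun t ht => by
      rw [← intervalIntegral.integral_of_le ht, ← intervalIntegral.integral_Ioi_sub_Ioi hfi ht,
        sub_sub_cancel]
  refine ((hasDerivAt_setIntegral_Ioc hf hx).const_sub (∫ y in Ioi a, f y)).congr_of_eventuallyEq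
    ?_
  filter_upwards [Ioi_mem_nhds hx] with t ht
  exact hsplit t (le_of_lt ht)

end Primitives

lemma MemC0.exists_abs_le {h : ℝ → ℝ} (hh : MemC0 h) : ∃ C, ∀ y ∈ Ici (0 : ℝ), |h y| ≤ C := by
  obtain ⟨M, hM⟩ := eventually_atTop.1
    (hh.2.abs.eventually (gt_mem_nhds (by norm_num : |(0 : ℝ)| < 1)))
  obtain ⟨C, hC⟩ := (isCompact_Icc (a := 0) (b := M)).exists_bound_of_continuousOn
    (hh.1.mono Icc_subset_Ici_self)
  refine ⟨max C 1, fun y hy => ?_⟩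
  rcases le_total y M with hyM | hMy
  · exact (hC y ⟨hy, hyM⟩).trans (le_max_left _ _)
  · exact (hM y hMy).le.trans (le_max_right _ _)

lemma MemC0.integrableOn_exp_neg_mul {h : ℝ → ℝ} (hh : MemC0 h) {c : ℝ} (hc : 0 < c) :
    IntegrableOn (fun y => exp (-(c * y)) * h y) (Ioi 0) := by
  obtain ⟨C, hC⟩ := hh.exists_abs_le
  have hexp := exp_neg_integrableOn_Ioi 0 hc
  simp_rw [neg_mul] at hexp
  exact hexp.mul_bdd (c := C)
    ((hh.1.mono Ioi_subset_Ici_self).aestronglyMeasurable measurableSet_Ioi)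
    ((ae_restrict_iff' measurableSet_Ioi).2
      (ae_of_all _ fun y hy => hC y (mem_Ici.2 (le_of_lt hy))))

section Resolvent

variable {α x : ℝ} {h : ℝ → ℝ}

lemma G0_eq (hα : 0 < α) (hh : MemC0 h) (hx : 0 < x) :
    G0 α h x = 2 / √(2 * α) * (exp (-(√(2 * α) * x)) * (∫ y in Ioc 0 x, sinh (√(2 * α) * y) * h y)
      + sinh (√(2 * α) * x) * (∫ y in Ioi x, exp (-(√(2 * α) * y)) * h y)) := by
  set c := √(2 * α) with hc_def
  have hc : 0 < c := sqrt_pos.2 (by positivity)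
  have hlow : EqOn (fun y => g0 α x y * h y)
      (fun y => 2 / c * exp (-(c * x)) * (sinh (c * y) * h y)) (Ioc 0 x) := by
    intro y hy
    simp only [g0, ← hc_def, min_eq_right hy.2, max_eq_left hy.2]
    ring
  have hhigh : EqOn (fun y => g0 α x y * h y)
      (fun y => 2 / c * sinh (c * x) * (exp (-(c * y)) * h y)) (Ioi x) := by
    intro y hy
    simp only [g0, ← hc_def, min_eq_left (mem_Ioi.1 hy).le, max_eq_right (mem_Ioi.1 hy).le]
    ring
  have hlow_int : IntegrableOn (fun y => sinh (c * y) * h y) (Ioc 0 x) :=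
    ((by fun_prop : Continuous fun y => sinh (c * y)).continuousOn.mul
      (hh.1.mono Icc_subset_Ici_self)).integrableOn_Icc.mono_set Ioc_subset_Icc_self
  have hhigh_int : IntegrableOn (fun y => exp (-(c * y)) * h y) (Ioi x) :=
    (hh.integrableOn_exp_neg_mul hc).mono_set (Ioi_subset_Ioi hx.le)
  rw [G0, ← Ioc_union_Ioi_eq_Ioi hx.le, setIntegral_union Ioc_disjoint_Ioi_same measurableSet_Ioi
      (IntegrableOn.congr_fun (hlow_int.const_mul _) hlow.symm measurableSet_Ioc)
      (IntegrableOn.congr_fun (hhigh_int.const_mul _) hhigh.symm measurableSet_Ioi),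
    setIntegral_congr_fun measurableSet_Ioc hlow, setIntegral_congr_fun measurableSet_Ioi hhigh,
    integral_const_mul, integral_const_mul]
  ring

lemma hasDerivAt_G0 (hα : 0 < α) (hh : MemC0 h) (hx : 0 < x) :
    HasDerivAt (G0 α h) (2 * (cosh (√(2 * α) * x) * (∫ y in Ioi x, exp (-(√(2 * α) * y)) * h y)
      - exp (-(√(2 * α) * x)) * (∫ y in Ioc 0 x, sinh (√(2 * α) * y) * h y))) x := by
  set c := √(2 * α)
  have hc : 0 < c := sqrt_pos.2 (by positivity)
  have hA : HasDerivAt (fun t => ∫ y in Ioc 0 t, sinh (c * y) * h y) (sinh (c * x) * h x) x :=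
    hasDerivAt_setIntegral_Ioc
      ((by fun_prop : Continuous fun y => sinh (c * y)).continuousOn.mul hh.1) hx
  have hB :
      HasDerivAt (fun t => ∫ y in Ioi t, exp (-(c * y)) * h y) (-(exp (-(c * x)) * h x)) x :=
    hasDerivAt_setIntegral_Ioi
      ((by fun_prop : Continuous fun y => exp (-(c * y))).continuousOn.mul hh.1)
      (hh.integrableOn_exp_neg_mul hc) hx
  have hE : HasDerivAt (fun t => exp (-(c * t))) (exp (-(c * x)) * -c) x := by
    simpa using ((hasDerivAt_id x).const_mul c).neg.exp
  have hS : HasDerivAt (fun t => sinh (c * t)) (cosh (c * x) * c) x := by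
    simpa using ((hasDerivAt_id x).const_mul c).sinh
  refine ((((hE.mul hA).add (hS.mul hB)).const_mul (2 / c)).congr_of_eventuallyEq ?_).congr_deriv
    ?_
  · filter_upwards [Ioi_mem_nhds hx] with t ht using G0_eq hα hh ht
  · field_simp
    ring

lemma tendsto_deriv_G0_nhdsGT (hα : 0 < α) (hh : MemC0 h) :
    Tendsto (deriv (G0 α h)) (𝓝[>] 0) (𝓝 (2 * ∫ y in Ioi 0, exp (-(√(2 * α) * y)) * h y)) := by
  set c := √(2 * α)
  have hc : 0 < c := sqrt_pos.2 (by positivity)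
  have hA : Tendsto (fun t => ∫ y in Ioc 0 t, sinh (c * y) * h y) (𝓝[>] 0) (𝓝 0) :=
    tendsto_setIntegral_Ioc_nhdsGT one_pos
      ((by fun_prop : Continuous fun y => sinh (c * y)).continuousOn.mul
        (hh.1.mono Icc_subset_Ici_self)).integrableOn_Icc
  have hB : Tendsto (fun t => ∫ y in Ioi t, exp (-(c * y)) * h y) (𝓝[>] 0)
      (𝓝 (∫ y in Ioi 0, exp (-(c * y)) * h y)) :=
    ((hh.integrableOn_exp_neg_mul hc).continuousWithinAt_Ici_primitive_Ioi.mono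
      Ioi_subset_Ici_self).tendsto
  have hcosh : Tendsto (fun t => cosh (c * t)) (𝓝[>] 0) (𝓝 1) := by
    simpa using ((by fun_prop : Continuous fun t => cosh (c * t)).tendsto 0).mono_left
      nhdsWithin_le_nhds
  have hexp : Tendsto (fun t => exp (-(c * t))) (𝓝[>] 0) (𝓝 1) := by
    simpa using ((by fun_prop : Continuous fun t => exp (-(c * t))).tendsto 0).mono_left
      nhdsWithin_le_nhds
  have hlim := ((hcosh.mul hB).sub (hexp.mul hA)).const_mul 2
  rw [one_mul, mul_zero, sub_zero] at hlim
  exact hlim.congr'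
    (eventually_nhdsWithin_of_forall fun t ht => (hasDerivAt_G0 hα hh ht).deriv.symm)

end Resolvent

/-- For `α > 0` and `h ∈ C₀([0,∞))`, `G⁰_α h` is differentiable on `(0,∞)` with
`(√(2α)/2)·(G⁰_α h)'(x) = −√(2α)·e^{−√(2α)x}·∫₀ˣ sinh(√(2α)y) h(y) dy
  + √(2α)·cosh(√(2α)x)·∫ₓ^∞ e^{−√(2α)y} h(y) dy`,
and `(G⁰_α h)'(x) → 2·∫₀^∞ h(y)·e^{−√(2α)y} dy` as `x → 0⁺`. -/
theorem stmt1 (α : ℝ) (hα : 0 < α) (h : ℝ → ℝ) (hh : MemC0 h) :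
    (∀ x ∈ Set.Ioi (0 : ℝ),
      DifferentiableAt ℝ (G0 α h) x ∧
        Real.sqrt (2 * α) / 2 * deriv (G0 α h) x =
          -Real.sqrt (2 * α) * Real.exp (-(Real.sqrt (2 * α) * x)) *
              (∫ y in Set.Ioc (0 : ℝ) x, Real.sinh (Real.sqrt (2 * α) * y) * h y) +
            Real.sqrt (2 * α) * Real.cosh (Real.sqrt (2 * α) * x) *
              (∫ y in Set.Ioi x, Real.exp (-(Real.sqrt (2 * α) * y)) * h y)) ∧
    Filter.Tendsto (deriv (G0 α h)) (nhdsWithin 0 (Set.Ioi 0))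
      (nhds (2 * ∫ y in Set.Ioi (0 : ℝ), h y * Real.exp (-(Real.sqrt (2 * α) * y)))) := by
  refine ⟨fun x hx => ⟨(hasDerivAt_G0 hα hh hx).differentiableAt, ?_⟩, ?_⟩
  · rw [(hasDerivAt_G0 hα hh hx).deriv]
    ring
  · simpa only [mul_comm (h _)] using tendsto_deriv_G0_nhdsGT hα hh
end

section
/- Let h : (0,∞) → ℝ be continuous with compact support contained in an interval [l, r] ⊂ (0,∞), where 0 < l ≤ r. Then there exist constants α₀ > 0 and C > 0 such that |α·G⁰_α h(x)| ≤ C·min(x, l/2) for every α ≥ α₀ and every x > 0. -/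
open MeasureTheory Real Filter Topology

/-!
Write `s = √(2α)`. Pointwise, `g⁰_α(x, y) ≤ e^{-s|x-y|} / s`, the resolvent density of free
Brownian motion, whose total mass is `2 / s² = 1 / α`; hence `|α G⁰_α h| ≤ sup |h|` on `(0, ∞)`.
For `x ≤ l/2` and `y ∈ [l, r]` the sharper bound `g⁰_α(x, y) ≤ 2x e^{-s(y-x)} ≤ 2x e^{-s l/2}`
holds, and `α e^{-s l/2} ≤ 4 / l²` since `u² e^{-u} ≤ 2`; this gives a bound linear in `x`.
-/

open Set

lemma Real.sinh_le_mul_exp (t : ℝ) : sinh t ≤ t * exp t := by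
  -- `2 sinh t = e^t (1 - e^{-2t})` and `1 - e^{-2t} ≤ 2t`
  have h1 := add_one_le_exp (-(2 * t))
  have h2 : exp (-t) = exp t * exp (-(2 * t)) := by rw [← exp_add]; ring_nf
  rw [sinh_eq]
  nlinarith [exp_pos t]

lemma Real.mul_exp_neg_sqrt_two_mul_le {α c : ℝ} (hα : 0 ≤ α) (hc : 0 < c) :
    α * exp (-(√(2 * α) * c)) ≤ 1 / c ^ 2 := by
  set u := √(2 * α) * c
  have hu : u ^ 2 = 2 * α * c ^ 2 := by rw [mul_pow, sq_sqrt (by positivity)]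
  have hu0 : 0 ≤ u := by positivity
  have hexp : u ^ 2 / 2 ≤ exp u := by linarith [quadratic_le_exp_of_nonneg hu0]
  rw [exp_neg, le_div_iff₀ (by positivity), ← div_eq_mul_inv, div_mul_eq_mul_div,
    div_le_one (exp_pos u)]
  linarith

lemma integrable_exp_neg_mul_abs {s : ℝ} (hs : 0 < s) :
    Integrable (fun y : ℝ ↦ exp (-(s * |y|))) := by
  rw [← integrableOn_univ, ← Iic_union_Ioi (a := 0), integrableOn_union]
  constructor
  · refine (integrableOn_exp_mul_Iic hs 0).congr_fun (fun y hy ↦ ?_) measurableSet_Iic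
    rw [abs_of_nonpos hy, mul_neg, neg_neg]
  · refine (integrableOn_exp_mul_Ioi (neg_neg_of_pos hs) 0).congr_fun (fun y hy ↦ ?_)
      measurableSet_Ioi
    simp [abs_of_pos (mem_Ioi.1 hy)]

lemma integral_exp_neg_mul_abs {s : ℝ} (hs : 0 < s) :
    ∫ y : ℝ, exp (-(s * |y|)) = 2 / s := by
  rw [integral_comp_abs (f := fun y ↦ exp (-(s * y)))]
  simp_rw [← neg_mul]
  rw [integral_exp_mul_Ioi (neg_neg_of_pos hs), mul_zero, exp_zero]
  field_simp

section resolvent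

variable {α x y : ℝ}

lemma g0_nonneg (hx : 0 ≤ x) (hy : 0 ≤ y) : 0 ≤ g0 α x y := by
  have : 0 ≤ sinh (√(2 * α) * min x y) := sinh_nonneg_iff.2 (by positivity)
  unfold g0
  positivity

lemma g0_le_exp_neg_abs_sub : g0 α x y ≤ exp (-(√(2 * α) * |x - y|)) / √(2 * α) := by
  set s := √(2 * α)
  have hs : 0 ≤ s := sqrt_nonneg _
  have habs : s * |x - y| = s * max x y - s * min x y := by
    rw [← mul_sub, max_sub_min_eq_abs']
  have hsinh : 2 * sinh (s * min x y) * exp (-(s * max x y)) ≤ exp (-(s * |x - y|)) := by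
    rw [habs, neg_sub, sub_eq_add_neg, exp_add, sinh_eq]
    gcongr
    linarith [exp_pos (-(s * min x y))]
  calc g0 α x y = 2 * sinh (s * min x y) * exp (-(s * max x y)) / s := by
        simp only [g0, s]; ring
    _ ≤ exp (-(s * |x - y|)) / s := by gcongr

lemma g0_le_of_le (hx : 0 ≤ x) (hxy : x ≤ y) :
    g0 α x y ≤ 2 * x * exp (-(√(2 * α) * (y - x))) := by
  set s := √(2 * α)
  rcases (show 0 ≤ s from sqrt_nonneg _).eq_or_lt with hs | hs
  · simp only [g0, ← hs, s, div_zero, zero_mul]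
    positivity
  calc g0 α x y = 2 / s * sinh (s * x) * exp (-(s * y)) := by
        simp only [g0, s, min_eq_left hxy, max_eq_right hxy]
    _ ≤ 2 / s * (s * x * exp (s * x)) * exp (-(s * y)) := by
        gcongr; exact sinh_le_mul_exp _
    _ = 2 * x * exp (-(s * (y - x))) := by
        rw [mul_sub, neg_sub, sub_eq_add_neg, exp_add]; field_simp

variable {h : ℝ → ℝ} {B : ℝ}

lemma abs_mul_G0_le (hα : 0 < α) (hx : 0 ≤ x) (hB : ∀ y, |h y| ≤ B) :
    |α * G0 α h x| ≤ B := by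
  set s := √(2 * α)
  have hs : 0 < s := sqrt_pos.2 (by positivity)
  set k : ℝ → ℝ := fun y ↦ B / s * exp (-(s * |y - x|))
  have hk : Integrable k := ((integrable_exp_neg_mul_abs hs).comp_sub_right x).const_mul _
  have hB0 : 0 ≤ B := (abs_nonneg _).trans (hB 0)
  have hk_nonneg : 0 ≤ k := fun y ↦ by positivity
  have hbound : ∀ᵐ y ∂volume.restrict (Ioi 0), ‖g0 α x y * h y‖ ≤ k y := by
    filter_upwards [ae_restrict_mem measurableSet_Ioi] with y hy
    rw [norm_mul, norm_of_nonneg (g0_nonneg hx (le_of_lt hy)), norm_eq_abs]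
    calc g0 α x y * |h y| ≤ exp (-(s * |x - y|)) / s * B :=
          mul_le_mul g0_le_exp_neg_abs_sub (hB y) (abs_nonneg _) (by positivity)
      _ = k y := by rw [abs_sub_comm]; ring
  have hk_int : ∫ y, k y = B / α := by
    rw [integral_const_mul, integral_sub_right_eq_self (fun y ↦ exp (-(s * |y|))),
      integral_exp_neg_mul_abs hs, div_mul_div_comm, ← sq, sq_sqrt (by positivity)]
    field_simp
  calc |α * G0 α h x| = α * ‖∫ y in Ioi 0, g0 α x y * h y‖ := by
        rw [abs_mul, abs_of_pos hα, G0, norm_eq_abs]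
    _ ≤ α * ∫ y in Ioi 0, k y :=
        mul_le_mul_of_nonneg_left (norm_integral_le_of_norm_le hk.integrableOn hbound) hα.le
    _ ≤ α * ∫ y, k y :=
        mul_le_mul_of_nonneg_left (setIntegral_le_integral hk (.of_forall hk_nonneg)) hα.le
    _ = B := by rw [hk_int]; field_simp

lemma G0_eq_setIntegral_Icc {l r : ℝ} (hl : 0 < l) (hsupp : ∀ y ∉ Icc l r, h y = 0) :
    G0 α h x = ∫ y in Icc l r, g0 α x y * h y :=
  setIntegral_eq_of_subset_of_forall_sdiff_eq_zero measurableSet_Ioi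
    (fun _ hy ↦ hl.trans_le hy.1) (fun y hy ↦ by rw [hsupp y hy.2, mul_zero])

lemma abs_mul_G0_le_mul {l r : ℝ} (hα : 0 ≤ α) (hl : 0 < l) (hlr : l ≤ r) (hx : 0 ≤ x)
    (hxl : x ≤ l / 2) (hB : ∀ y, |h y| ≤ B) (hsupp : ∀ y ∉ Icc l r, h y = 0) :
    |α * G0 α h x| ≤ 8 * B * (r - l) / l ^ 2 * x := by
  set s := √(2 * α)
  have hB0 : 0 ≤ B := (abs_nonneg _).trans (hB 0)
  have hbound : ∀ y ∈ Icc l r, ‖g0 α x y * h y‖ ≤ 2 * x * exp (-(s * (l / 2))) * B := by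
    intro y hy
    have hxy : l / 2 ≤ y - x := by linarith [hy.1]
    rw [norm_mul, norm_of_nonneg (g0_nonneg hx (by linarith)), norm_eq_abs]
    gcongr
    · calc g0 α x y ≤ 2 * x * exp (-(s * (y - x))) := g0_le_of_le hx (by linarith)
        _ ≤ 2 * x * exp (-(s * (l / 2))) := by gcongr
    · exact hB y
  have hint : ‖∫ y in Icc l r, g0 α x y * h y‖ ≤ 2 * x * exp (-(s * (l / 2))) * B * (r - l) := by
    simpa [volume_real_Icc_of_le hlr] using
      norm_setIntegral_le_of_norm_le_const (μ := volume) measure_Icc_lt_top hbound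
  calc |α * G0 α h x| = α * ‖∫ y in Icc l r, g0 α x y * h y‖ := by
        rw [abs_mul, abs_of_nonneg hα, G0_eq_setIntegral_Icc hl hsupp, norm_eq_abs]
    _ ≤ α * (2 * x * exp (-(s * (l / 2))) * B * (r - l)) := by gcongr
    _ = α * exp (-(s * (l / 2))) * (2 * B * (r - l) * x) := by ring
    _ ≤ 1 / (l / 2) ^ 2 * (2 * B * (r - l) * x) := by
        have := sub_nonneg.2 hlr
        gcongr
        exact mul_exp_neg_sqrt_two_mul_le hα (by positivity)
    _ = 8 * B * (r - l) / l ^ 2 * x := by field_simp; ring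

end resolvent

/-- If `h` is continuous with support contained in `[l,r] ⊂ (0,∞)`, then there are
`α₀ > 0` and `C > 0` with `|α·G⁰_α h(x)| ≤ C·min(x, l/2)` for all `α ≥ α₀`, `x > 0`. -/
theorem stmt7 (h : ℝ → ℝ) (hcont : Continuous h) (l r : ℝ) (hl : 0 < l) (hlr : l ≤ r)
    (hsupp : ∀ x, x ∉ Set.Icc l r → h x = 0) :
    ∃ α₀ > (0 : ℝ), ∃ C > (0 : ℝ), ∀ α ≥ α₀, ∀ x > (0 : ℝ),
      |α * G0 α h x| ≤ C * min x (l / 2) := by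
  obtain ⟨B, hB_pos, hB⟩ : ∃ B > 0, ∀ y, |h y| ≤ B := by
    obtain ⟨B, hB⟩ := hcont.bounded_above_of_compact_support (.intro isCompact_Icc hsupp)
    exact ⟨max B 1, by positivity, fun y ↦ (hB y).trans (le_max_left _ _)⟩
  have hrl := sub_nonneg.2 hlr
  refine ⟨1, one_pos, 2 * B / l + 8 * B * (r - l) / l ^ 2, by positivity, fun α hα x hx ↦ ?_⟩
  have hα_pos : 0 < α := one_pos.trans_le hα
  rcases le_total x (l / 2) with hxl | hxl
  · rw [min_eq_left hxl]
    calc |α * G0 α h x| ≤ 8 * B * (r - l) / l ^ 2 * x :=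
          abs_mul_G0_le_mul hα_pos.le hl hlr hx.le hxl hB hsupp
      _ ≤ _ := by gcongr; exact le_add_of_nonneg_left (by positivity)
  · rw [min_eq_right hxl]
    calc |α * G0 α h x| ≤ B := abs_mul_G0_le hα_pos hx.le hB
      _ = 2 * B / l * (l / 2) := by field_simp
      _ ≤ _ := by gcongr; exact le_add_of_nonneg_right (by positivity)
end

section
/- Under the stated consistency assumptions, for all m > n one has 0 < K_{m,n} ≤ 1 and 0 < Λₙ ≤ 1, the rescaled restrictions agree: Λₘ⁻¹·λ⁽ᵐ⁾|_{(ĉₙ,∞)} = Λₙ⁻¹·λ⁽ⁿ⁾|_{(ĉₙ,∞)} for all m > n; consequently there exists a unique σ-finite Borel measure λ on (0,∞) with λ|_{(ĉₙ,∞)} = Λₙ⁻¹·λ⁽ⁿ⁾|_{(ĉₙ,∞)} for every n, the quantity dₙ/Λₙ does not depend on n (denote it d_∂), and moreover ∫_{(0,∞)} min(1,x) λ(dx) < ∞. -/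
/-!
Write `φ_C(x) = 1 - x / C`. On `[ĉₘ, ĉₙ)` one has `φ_{ĉ₀} = φ_{ĉₙ} + (ĉₙ⁻¹ - ĉ₀⁻¹) x`, and the atom
that the consistency relation places at `ĉₙ` carries exactly the first moment of `λ⁽ᵐ⁾` on
`[ĉₘ, ĉₙ)`; together these give `Λₘ = K_{m,n} Λₙ`. Since `λ⁽ⁿ⁾` and `K_{m,n}⁻¹ λ⁽ᵐ⁾` agree above `ĉₙ`,
the measures `Λₙ⁻¹ λ⁽ⁿ⁾|_{(ĉₙ,∞)}` form a projective family, whose limit is their supremum, and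
`dₙ / Λₙ` is constant. Finally `min(1, x) ≤ x` below `ĉ₀`, and the first moment of `λ⁽ᵐ⁾` on
`[ĉₘ, ĉ₀)` is stored in the atom of `Λₘ λ⁽⁰⁾` at `ĉ₀`, so `∫_{(ĉₘ,∞)} min(1, x) λ(dx)` is bounded by
`(ĉ₀ + 1) λ⁽⁰⁾(ℝ)` uniformly in `m`.
-/

open MeasureTheory Real Filter Topology Set

section ProjectiveLimit

variable {α : Type*} [MeasurableSpace α]

theorem exists_measure_apply_eq_iSup {ν : ℕ → Measure α} (hν : Monotone ν) :
    ∃ μ : Measure α, ∀ s, MeasurableSet s → μ s = ⨆ n, ν n s := by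
  refine ⟨Measure.ofMeasurable (fun s _ => ⨆ n, ν n s) (by simp) fun f hfm hfd => ?_,
    fun s hs => Measure.ofMeasurable_apply s hs⟩
  simp only [measure_iUnion hfd hfm, ← lintegral_count]
  exact (lintegral_iSup (fun _ => measurable_of_countable _) fun _ _ h i => hν h (f i)).symm

theorem exists_restrict_eq_of_restrict_eq {S : ℕ → Set α} (hS : ∀ n, MeasurableSet (S n))
    {ν : ℕ → Measure α} (hν : ∀ n m, n ≤ m → (ν m).restrict (S n) = ν n) :
    ∃ μ : Measure α, μ (⋃ n, S n)ᶜ = 0 ∧ ∀ n, μ.restrict (S n) = ν n := by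
  have hmono : Monotone ν := fun n m h => hν n m h ▸ Measure.restrict_le_self
  have hself : ∀ n s, MeasurableSet s → ν n s = ν n (s ∩ S n) := fun n s hs => by
    rw [← Measure.restrict_apply hs, hν n n le_rfl]
  obtain ⟨μ, hμ⟩ := exists_measure_apply_eq_iSup hmono
  refine ⟨μ, ?_, fun n => Measure.ext fun s hs => ?_⟩
  · rw [hμ _ (MeasurableSet.iUnion hS).compl, ENNReal.iSup_eq_zero]
    intro n
    rw [hself n _ (MeasurableSet.iUnion hS).compl]
    exact measure_mono_null (fun x hx => hx.1 (mem_iUnion_of_mem n hx.2)) measure_empty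
  · rw [Measure.restrict_apply hs, hμ _ (hs.inter (hS n))]
    refine le_antisymm (iSup_le fun k => ?_) ?_
    · calc ν k (s ∩ S n) ≤ ν (max k n) (s ∩ S n) := hmono (le_max_left k n) _
        _ = ν n s := by rw [← Measure.restrict_apply hs, hν n _ (le_max_right k n)]
    · exact (hself n s hs).le.trans (le_iSup (fun k => ν k (s ∩ S n)) n)

theorem ext_of_restrict_eq_of_measure_compl_iUnion {ι : Type*} [Countable ι] {S : ι → Set α}
    {μ₁ μ₂ : Measure α} (h₁ : μ₁ (⋃ i, S i)ᶜ = 0) (h₂ : μ₂ (⋃ i, S i)ᶜ = 0)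
    (h : ∀ i, μ₁.restrict (S i) = μ₂.restrict (S i)) : μ₁ = μ₂ := by
  rw [← Measure.restrict_eq_self_of_ae_mem (ae_iff.2 h₁),
    ← Measure.restrict_eq_self_of_ae_mem (ae_iff.2 h₂)]
  exact Measure.restrict_iUnion_congr.2 h

theorem sigmaFinite_of_measure_compl_iUnion {S : ℕ → Set α} {μ : Measure α}
    (h : μ (⋃ n, S n)ᶜ = 0) (hfin : ∀ n, μ (S n) < ⊤) : SigmaFinite μ := by
  refine Measure.sigmaFinite_of_countable ((countable_range S).insert (⋃ n, S n)ᶜ) ?_ ?_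
  · simp only [mem_insert_iff, mem_range]
    rintro s (rfl | ⟨n, rfl⟩)
    exacts [h ▸ ENNReal.zero_lt_top, hfin n]
  · rw [sUnion_insert, sUnion_range, compl_union_self]

end ProjectiveLimit

theorem iUnion_Ioi_eq_Ioi_of_tendsto {c : ℕ → ℝ} {l : ℝ} (hlt : ∀ n, l < c n)
    (hc : Tendsto c atTop (𝓝 l)) : ⋃ n, Ioi (c n) = Ioi l := by
  ext x
  simp only [mem_iUnion, mem_Ioi]
  exact ⟨fun ⟨n, hn⟩ => (hlt n).trans hn, fun hx => (hc.eventually (gt_mem_nhds hx)).exists⟩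

theorem setLIntegral_Ioi_le_of_tendsto {c : ℕ → ℝ} {l : ℝ} (hlt : ∀ n, l < c n)
    (hanti : Antitone c) (hc : Tendsto c atTop (𝓝 l)) {μ : Measure ℝ} {f : ℝ → ENNReal}
    {B : ENNReal} (hbound : ∀ n, ∫⁻ x in Ioi (c n), f x ∂μ ≤ B) :
    ∫⁻ x in Ioi l, f x ∂μ ≤ B := by
  rw [← iUnion_Ioi_eq_Ioi_of_tendsto hlt hc, setLIntegral_iUnion_of_directed _
    (Monotone.directed_le fun _ _ h => Ioi_subset_Ioi (hanti h))]
  exact iSup_le hbound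

theorem existsUnique_measure_restrict_Ioi_eq {c : ℕ → ℝ} (hcpos : ∀ n, 0 < c n)
    (hc0 : Tendsto c atTop (𝓝 0)) {ν : ℕ → Measure ℝ} (hfin : ∀ n, ν n (Ioi (c n)) < ⊤)
    (hν : ∀ n m, n ≤ m → (ν m).restrict (Ioi (c n)) = ν n) :
    ∃! μ : Measure ℝ, SigmaFinite μ ∧ μ (Iic 0) = 0 ∧ ∀ n, μ.restrict (Ioi (c n)) = ν n := by
  have hU : (⋃ n, Ioi (c n))ᶜ = Iic 0 := by
    rw [iUnion_Ioi_eq_Ioi_of_tendsto hcpos hc0, compl_Ioi]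
  obtain ⟨μ, hμ0, hμν⟩ := exists_restrict_eq_of_restrict_eq (fun _ => measurableSet_Ioi) hν
  have hμ_sigma : SigmaFinite μ := sigmaFinite_of_measure_compl_iUnion hμ0 fun n => by
    rw [← Measure.restrict_apply_self, hμν n]
    exact hfin n
  refine ⟨μ, ⟨hμ_sigma, hU ▸ hμ0, hμν⟩, fun μ' ⟨_, hμ'0, hμ'ν⟩ => ?_⟩
  exact ext_of_restrict_eq_of_measure_compl_iUnion (hU ▸ hμ'0) hμ0 fun n =>
    (hμ'ν n).trans (hμν n).symm

/-- `sweep μ a b` moves the mass of `μ` on `[a, b)` to an atom at `b` with the same first moment.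
The consistency assumption reads `λ⁽ⁿ⁾ = K_{m,n}⁻¹ • sweep λ⁽ᵐ⁾ ĉₘ ĉₙ`, where
`K_{m,n} = sweepNormalizer λ⁽ᵐ⁾ ĉₘ ĉₙ` and `Λₙ = sweepNormalizer λ⁽ⁿ⁾ ĉₙ ĉ₀`. -/
noncomputable def sweep (μ : Measure ℝ) (a b : ℝ) : Measure ℝ :=
  ENNReal.ofReal (b⁻¹ * ∫ x in Ico a b, x ∂μ) • Measure.dirac b + μ.restrict (Ici b)

noncomputable def sweepNormalizer (μ : Measure ℝ) (a b : ℝ) : ℝ :=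
  1 - ∫ x in Ico a b, (1 - x / b) ∂μ

section Sweep

variable {μ : Measure ℝ} {a b C : ℝ}

theorem sweepNormalizer_self : sweepNormalizer μ a a = 1 := by
  simp [sweepNormalizer]

theorem sweepNormalizer_mem_Ioc [IsFiniteMeasure μ] (ha : 0 < a) (hab : a ≤ b)
    (hμ : μ.real (Ioi 0) ≤ 1) : sweepNormalizer μ a b ∈ Ioc 0 1 := by
  have hb : 0 < b := ha.trans_le hab
  have hab' : 0 < a / b ∧ a / b ≤ 1 := ⟨div_pos ha hb, (div_le_one hb).2 hab⟩
  have hmass : μ.real (Ico a b) ≤ 1 :=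
    (measureReal_mono fun x hx => ha.trans_le hx.1).trans hμ
  have hnonneg : 0 ≤ ∫ x in Ico a b, (1 - x / b) ∂μ :=
    setIntegral_nonneg measurableSet_Ico fun x hx => by
      linarith [(div_le_one hb).2 hx.2.le]
  have hle : ∫ x in Ico a b, (1 - x / b) ∂μ ≤ 1 - a / b :=
    calc ∫ x in Ico a b, (1 - x / b) ∂μ ≤ ∫ _ in Ico a b, (1 - a / b) ∂μ :=
          setIntegral_mono_on
            ((by fun_prop : Continuous fun x : ℝ => 1 - x / b).integrableOn_Icc.mono_set
              Ico_subset_Icc_self)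
            (integrableOn_const (measure_ne_top _ _)) measurableSet_Ico
            fun x hx => by gcongr; exact hx.1
      _ = μ.real (Ico a b) * (1 - a / b) := by rw [setIntegral_const, smul_eq_mul]
      _ ≤ 1 - a / b := mul_le_of_le_one_left (by linarith) hmass
  unfold sweepNormalizer
  constructor <;> linarith

theorem setIntegral_Ico_sweep [IsFiniteMeasure μ] (ha : 0 ≤ a) (hb : 0 ≤ b) (hbC : b < C)
    {f : ℝ → ℝ} (hf : Continuous f) :
    ∫ x in Ico b C, f x ∂(sweep μ a b) =
      (b⁻¹ * ∫ x in Ico a b, x ∂μ) * f b + ∫ x in Ico b C, f x ∂μ := by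
  have hf' : ∀ ν : Measure ℝ, [IsFiniteMeasure ν] → IntegrableOn f (Ico b C) ν := fun _ _ =>
    hf.integrableOn_Icc.mono_set Ico_subset_Icc_self
  have hA : 0 ≤ b⁻¹ * ∫ x in Ico a b, x ∂μ :=
    mul_nonneg (inv_nonneg.2 hb) (setIntegral_nonneg measurableSet_Ico fun _ hx => ha.trans hx.1)
  rw [sweep, Measure.restrict_add, integral_add_measure, Measure.restrict_smul,
    integral_smul_measure, setIntegral_dirac, if_pos (show b ∈ Ico b C from ⟨le_rfl, hbC⟩),
    ENNReal.toReal_ofReal hA, Measure.restrict_restrict measurableSet_Ico,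
    inter_eq_left.2 Ico_subset_Ici_self, smul_eq_mul]
  · rw [Measure.restrict_smul]
    exact (hf' _).smul_measure ENNReal.ofReal_ne_top
  · exact hf' _

theorem sweepNormalizer_trans [IsFiniteMeasure μ] (ha : 0 < a) (hab : a ≤ b) (hbC : b ≤ C)
    (hK : 0 < sweepNormalizer μ a b) :
    sweepNormalizer μ a C = sweepNormalizer μ a b *
      sweepNormalizer ((ENNReal.ofReal (sweepNormalizer μ a b))⁻¹ • sweep μ a b) b C := by
  obtain rfl | hbC := hbC.eq_or_lt
  · rw [sweepNormalizer_self, mul_one]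
  have hb : 0 < b := ha.trans_le hab
  have hC : 0 < C := hb.trans hbC
  have hint : ∀ {u v : ℝ} (g : ℝ → ℝ), Continuous g → IntegrableOn g (Ico u v) μ := fun _ hg =>
    hg.integrableOn_Icc.mono_set Ico_subset_Icc_self
  have hlower : ∫ x in Ico a b, (1 - x / C) ∂μ =
      ∫ x in Ico a b, ((1 - x / b) + (b⁻¹ - C⁻¹) * x) ∂μ :=
    setIntegral_congr_fun measurableSet_Ico fun x _ => by field_simp; ring
  rw [integral_add (hint _ (by fun_prop)) ((hint _ continuous_id').const_mul _),
    integral_const_mul] at hlower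
  have hsplit : ∫ x in Ico a C, (1 - x / C) ∂μ = ∫ x in Ico a b, (1 - x / b) ∂μ +
      (b⁻¹ - C⁻¹) * (∫ x in Ico a b, x ∂μ) + ∫ x in Ico b C, (1 - x / C) ∂μ := by
    rw [← Ico_union_Ico_eq_Ico hab hbC.le, setIntegral_union Ico_disjoint_Ico_same
      measurableSet_Ico (hint _ (by fun_prop)) (hint _ (by fun_prop)), hlower]
  have hswept := setIntegral_Ico_sweep (μ := μ) ha.le hb.le hbC (f := fun x => 1 - x / C)
    (by fun_prop)
  simp only [sweepNormalizer] at hK ⊢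
  rw [Measure.restrict_smul, integral_smul_measure, hswept, hsplit, ENNReal.toReal_inv,
    ENNReal.toReal_ofReal hK.le, smul_eq_mul]
  generalize ∫ x in Ico a b, (1 - x / b) ∂μ = I at hK ⊢
  generalize ∫ x in Ico a b, x ∂μ = A
  generalize ∫ x in Ico b C, (1 - x / C) ∂μ = J
  field_simp
  ring

theorem restrict_Ioi_sweep : (sweep μ a b).restrict (Ioi b) = μ.restrict (Ioi b) := by
  rw [sweep, Measure.restrict_add, Measure.restrict_smul, Measure.restrict_restrict
    measurableSet_Ioi, inter_eq_left.2 Ioi_subset_Ici_self,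
    show (Measure.dirac b).restrict (Ioi b) = 0 from Measure.restrict_eq_zero.2 (by simp),
    smul_zero, zero_add]

theorem smul_restrict_Ioi_eq_of_eq_smul_sweep {ν : Measure ℝ} {K Λ : ℝ} (hK : 0 < K)
    (hΛ : 0 < Λ) (hν : ν = (ENNReal.ofReal K)⁻¹ • sweep μ a b) :
    (ENNReal.ofReal (K * Λ))⁻¹ • μ.restrict (Ioi b) =
      (ENNReal.ofReal Λ)⁻¹ • ν.restrict (Ioi b) := by
  rw [hν, Measure.restrict_smul, restrict_Ioi_sweep, smul_smul,
    ← ENNReal.ofReal_inv_of_pos (mul_pos hK hΛ), ← ENNReal.ofReal_inv_of_pos hΛ,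
    ← ENNReal.ofReal_inv_of_pos hK, ← ENNReal.ofReal_mul (inv_nonneg.2 hΛ.le), mul_inv, mul_comm]

theorem lintegral_Ici_min_one_le_sweep [IsFiniteMeasure μ] (ha : 0 < a) (hab : a ≤ b) :
    ∫⁻ x in Ici a, ENNReal.ofReal (min 1 x) ∂μ ≤ (ENNReal.ofReal b + 1) * sweep μ a b univ := by
  have hb : 0 < b := ha.trans_le hab
  have hatom : ∫⁻ x in Ico a b, ENNReal.ofReal (min 1 x) ∂μ ≤
      ENNReal.ofReal b * ENNReal.ofReal (b⁻¹ * ∫ x in Ico a b, x ∂μ) := by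
    rw [← ENNReal.ofReal_mul hb.le, mul_inv_cancel_left₀ hb.ne',
      ofReal_integral_eq_lintegral_ofReal
        ((continuous_id'.integrableOn_Icc).mono_set Ico_subset_Icc_self)
        ((ae_restrict_mem measurableSet_Ico).mono fun x hx => ha.le.trans hx.1)]
    exact lintegral_mono fun x => ENNReal.ofReal_le_ofReal (min_le_right 1 x)
  have htail : ∫⁻ x in Ici b, ENNReal.ofReal (min 1 x) ∂μ ≤ μ.restrict (Ici b) univ := by
    rw [Measure.restrict_apply_univ, ← setLIntegral_one]
    exact lintegral_mono fun x => ENNReal.ofReal_le_one.2 (min_le_left 1 x)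
  rw [← Ico_union_Ici_eq_Ici hab, lintegral_union measurableSet_Ici
    ((Iio_disjoint_Ici le_rfl).mono_left Ico_subset_Iio_self)]
  simp only [sweep, Measure.add_apply, Measure.smul_apply, measure_univ, smul_eq_mul, mul_one]
  calc _ ≤ ENNReal.ofReal b * ENNReal.ofReal (b⁻¹ * ∫ x in Ico a b, x ∂μ) +
        μ.restrict (Ici b) univ := add_le_add hatom htail
    _ ≤ _ := by
      rw [mul_add]
      gcongr
      · exact le_self_add
      · exact le_mul_of_one_le_left' le_add_self

theorem setLIntegral_Ioi_min_one_le {ρ ρ₀ : Measure ℝ} [IsFiniteMeasure ρ] {Λ : ℝ}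
    (hb : 0 < b) (hbC : b ≤ C)
    (hμ : μ.restrict (Ioi b) = (ENNReal.ofReal Λ)⁻¹ • ρ.restrict (Ioi b))
    (hρ₀ : ρ₀ = (ENNReal.ofReal Λ)⁻¹ • sweep ρ b C) :
    ∫⁻ x in Ioi b, ENNReal.ofReal (min 1 x) ∂μ ≤ (ENNReal.ofReal C + 1) * ρ₀ univ := by
  calc ∫⁻ x in Ioi b, ENNReal.ofReal (min 1 x) ∂μ
      = (ENNReal.ofReal Λ)⁻¹ * ∫⁻ x in Ioi b, ENNReal.ofReal (min 1 x) ∂ρ := by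
        rw [hμ, lintegral_smul_measure, smul_eq_mul]
    _ ≤ (ENNReal.ofReal Λ)⁻¹ * ((ENNReal.ofReal C + 1) * sweep ρ b C univ) := by
        gcongr
        exact (lintegral_mono_set Ioi_subset_Ici_self).trans
          (lintegral_Ici_min_one_le_sweep hb hbC)
    _ = (ENNReal.ofReal C + 1) * ρ₀ univ := by
        rw [hρ₀, Measure.smul_apply, smul_eq_mul, mul_left_comm]

end Sweep

theorem smul_restrict_Ioi_restrict_Ioi_of_le {c : ℕ → ℝ} (hc : Antitone c) {ρ : ℕ → Measure ℝ}
    {w : ℕ → ENNReal} (h : ∀ m n, n < m →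
      w m • (ρ m).restrict (Ioi (c n)) = w n • (ρ n).restrict (Ioi (c n)))
    (n m : ℕ) (hnm : n ≤ m) :
    (w m • (ρ m).restrict (Ioi (c m))).restrict (Ioi (c n)) = w n • (ρ n).restrict (Ioi (c n)) := by
  rw [Measure.restrict_smul, Measure.restrict_restrict measurableSet_Ioi,
    inter_eq_left.2 (Ioi_subset_Ioi (hc hnm))]
  obtain rfl | hlt := hnm.eq_or_lt
  exacts [rfl, h m n hlt]

theorem stmt15_general (c : ℕ → ℝ) (hcpos : ∀ n, 0 < c n) (hanti : StrictAnti c)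
    (hc0 : Filter.Tendsto c Filter.atTop (nhds 0))
    (lam : ℕ → Measure ℝ) (hfin : ∀ n, IsFiniteMeasure (lam n))
    (d : ℕ → ℝ) (hd : ∀ n, 0 ≤ d n)
    (hmass : ∀ n, (lam n (Set.Ioi 0)).toReal + d n = 1)
    (K : ℕ → ℕ → ℝ)
    (hK : ∀ m n, n < m →
      K m n = 1 - ∫ x in Set.Ico (c m) (c n), (1 - x / c n) ∂(lam m))
    (hcons : ∀ m n, n < m →
      lam n = (ENNReal.ofReal (K m n))⁻¹ •
        (ENNReal.ofReal ((c n)⁻¹ * ∫ x in Set.Ico (c m) (c n), x ∂(lam m)) •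
            Measure.dirac (c n) +
          (lam m).restrict (Set.Ici (c n))))
    (hdcons : ∀ m n, n < m → d n = d m / K m n)
    (Λ : ℕ → ℝ)
    (hΛ : ∀ n, Λ n = 1 - ∫ x in Set.Ico (c n) (c 0), (1 - x / c 0) ∂(lam n)) :
    (∀ m n, n < m → 0 < K m n ∧ K m n ≤ 1) ∧
    (∀ n, 0 < Λ n ∧ Λ n ≤ 1) ∧
    (∀ m n, n < m →
      (ENNReal.ofReal (Λ m))⁻¹ • (lam m).restrict (Set.Ioi (c n)) =
        (ENNReal.ofReal (Λ n))⁻¹ • (lam n).restrict (Set.Ioi (c n))) ∧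
    (∃! μ : Measure ℝ, SigmaFinite μ ∧ μ (Set.Iic 0) = 0 ∧
        ∀ n, μ.restrict (Set.Ioi (c n)) =
          (ENNReal.ofReal (Λ n))⁻¹ • (lam n).restrict (Set.Ioi (c n))) ∧
    (∀ m n, d m / Λ m = d n / Λ n) ∧
    (∀ μ : Measure ℝ, μ (Set.Iic 0) = 0 →
      (∀ n, μ.restrict (Set.Ioi (c n)) =
        (ENNReal.ofReal (Λ n))⁻¹ • (lam n).restrict (Set.Ioi (c n))) →
      (∫⁻ x in Set.Ioi (0 : ℝ), ENNReal.ofReal (min 1 x) ∂μ) < ⊤) := by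
  have hmass1 : ∀ n, (lam n).real (Ioi 0) ≤ 1 := fun n =>
    (le_add_of_nonneg_right (hd n)).trans (hmass n).le
  have hK_mem : ∀ m n, n < m → K m n ∈ Ioc 0 1 := fun m n h =>
    hK m n h ▸ sweepNormalizer_mem_Ioc (hcpos m) (hanti h).le (hmass1 m)
  have hΛ_mem : ∀ n, Λ n ∈ Ioc 0 1 := fun n =>
    hΛ n ▸ sweepNormalizer_mem_Ioc (hcpos n) (hanti.antitone n.zero_le) (hmass1 n)
  have hΛ_mul : ∀ m n, n < m → Λ m = K m n * Λ n := fun m n h => by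
    have hKs : K m n = sweepNormalizer (lam m) (c m) (c n) := hK m n h
    rw [hΛ, hΛ, hcons m n h, hKs]
    exact sweepNormalizer_trans (hcpos m) (hanti h).le (hanti.antitone n.zero_le)
      (hKs ▸ (hK_mem m n h).1)
  have hrestrict : ∀ m n, n < m →
      (ENNReal.ofReal (Λ m))⁻¹ • (lam m).restrict (Ioi (c n)) =
        (ENNReal.ofReal (Λ n))⁻¹ • (lam n).restrict (Ioi (c n)) := fun m n h => by
    rw [hΛ_mul m n h]
    exact smul_restrict_Ioi_eq_of_eq_smul_sweep (hK_mem m n h).1 (hΛ_mem n).1 (hcons m n h)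
  have hK0 : ∀ m, 0 < m → K m 0 = Λ m := fun m h => by
    rw [hΛ_mul m 0 h, show Λ 0 = 1 from (hΛ 0).trans sweepNormalizer_self, mul_one]
  refine ⟨hK_mem, hΛ_mem, hrestrict, existsUnique_measure_restrict_Ioi_eq hcpos hc0 (fun n =>
      ENNReal.mul_lt_top (ENNReal.inv_lt_top.2 (ENNReal.ofReal_pos.2 (hΛ_mem n).1))
        (measure_lt_top _ _)) (smul_restrict_Ioi_restrict_Ioi_of_le hanti.antitone hrestrict),
    fun m n => ?_, fun μ _ hμ => ?_⟩
  · rcases lt_trichotomy n m with h | rfl | h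
    · rw [hdcons m n h, hΛ_mul m n h, div_div]
    · rfl
    · rw [hdcons n m h, hΛ_mul n m h, div_div]
  · refine (setLIntegral_Ioi_le_of_tendsto (fun n => hcpos (n + 1))
      (fun _ _ h => hanti.antitone (Nat.succ_le_succ h)) (hc0.comp (tendsto_add_atTop_nat 1))
      fun m => ?_).trans_lt (by finiteness : (ENNReal.ofReal (c 0) + 1) * lam 0 univ < ⊤)
    exact setLIntegral_Ioi_min_one_le (hcpos _) (hanti.antitone (Nat.zero_le _)) (hμ _)
      (hK0 (m + 1) m.succ_pos ▸ hcons (m + 1) 0 m.succ_pos)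

/-- Consistency of instantaneous distributions of the approximating Doob's Brownian
motions, and existence of the limiting measure `λ`. Here `c n = ĉₙ ↓ 0`, `lam n = λ⁽ⁿ⁾`
is a finite measure carried by `[ĉₙ,∞)`, `d n` is its mass at the cemetery, `K m n`
is the normalizing constant relating `λ⁽ᵐ⁾` to `λ⁽ⁿ⁾`, and `Λ n` relates `λ⁽ⁿ⁾` to
`λ⁽⁰⁾`. -/
theorem stmt15 (c : ℕ → ℝ) (hcpos : ∀ n, 0 < c n) (hanti : StrictAnti c)
    (hc0 : Filter.Tendsto c Filter.atTop (nhds 0))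
    (lam : ℕ → Measure ℝ) (hfin : ∀ n, IsFiniteMeasure (lam n))
    (hcarry : ∀ n, lam n (Set.Iio (c n)) = 0)
    (d : ℕ → ℝ) (hd : ∀ n, 0 ≤ d n)
    (hmass : ∀ n, (lam n (Set.Ioi 0)).toReal + d n = 1)
    (K : ℕ → ℕ → ℝ)
    (hK : ∀ m n, n < m →
      K m n = 1 - ∫ x in Set.Ico (c m) (c n), (1 - x / c n) ∂(lam m))
    (hcons : ∀ m n, n < m →
      lam n = (ENNReal.ofReal (K m n))⁻¹ •
        (ENNReal.ofReal ((c n)⁻¹ * ∫ x in Set.Ico (c m) (c n), x ∂(lam m)) •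
            Measure.dirac (c n) +
          (lam m).restrict (Set.Ici (c n))))
    (hdcons : ∀ m n, n < m → d n = d m / K m n)
    (Λ : ℕ → ℝ)
    (hΛ : ∀ n, Λ n = 1 - ∫ x in Set.Ico (c n) (c 0), (1 - x / c 0) ∂(lam n)) :
    (∀ m n, n < m → 0 < K m n ∧ K m n ≤ 1) ∧
    (∀ n, 0 < Λ n ∧ Λ n ≤ 1) ∧
    (∀ m n, n < m →
      (ENNReal.ofReal (Λ m))⁻¹ • (lam m).restrict (Set.Ioi (c n)) =
        (ENNReal.ofReal (Λ n))⁻¹ • (lam n).restrict (Set.Ioi (c n))) ∧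
    (∃! μ : Measure ℝ, SigmaFinite μ ∧ μ (Set.Iic 0) = 0 ∧
        ∀ n, μ.restrict (Set.Ioi (c n)) =
          (ENNReal.ofReal (Λ n))⁻¹ • (lam n).restrict (Set.Ioi (c n))) ∧
    (∀ m n, d m / Λ m = d n / Λ n) ∧
    (∀ μ : Measure ℝ, μ (Set.Iic 0) = 0 →
      (∀ n, μ.restrict (Set.Ioi (c n)) =
        (ENNReal.ofReal (Λ n))⁻¹ • (lam n).restrict (Set.Ioi (c n))) →
      (∫⁻ x in Set.Ioi (0 : ℝ), ENNReal.ofReal (min 1 x) ∂μ) < ⊤) :=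
  stmt15_general c hcpos hanti hc0 lam hfin d hd hmass K hK hcons hdcons Λ hΛ
end

section
/- Under the stated consistency assumptions, let λ be the unique σ-finite Borel measure on (0,∞) with λ|_{(ĉₙ,∞)} = Λₙ⁻¹·λ⁽ⁿ⁾|_{(ĉₙ,∞)} for every n, and let d_∂ := d₀ (= dₙ/Λₙ for every n, since Λ₀ = 1). Then for every n ∈ ℕ: 1/Λₙ = λ((ĉₙ,∞)) + d_∂ + ( ĉ₀·(1 − λ((ĉ₀,∞)) − d_∂) − ∫_{(ĉₙ,ĉ₀]} x λ(dx) )/ĉₙ, and λ⁽ⁿ⁾({ĉₙ}) = (Λₙ/ĉₙ)·( ĉ₀·(1 − λ((ĉ₀,∞)) − d_∂) − ∫_{(ĉₙ,ĉ₀]} x λ(dx) ). -/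
/-!
On `(ĉₙ, ∞)` the measure `λ` is `λ⁽ⁿ⁾ / Λₙ`, so both formulas reduce to one identity for the
single finite measure `ν = λ⁽ⁿ⁾`, carried by `[ĉₙ, ∞)`. Writing `1 - x/ĉ₀` as mass minus first
moment over `ĉ₀` and moving the atoms of `ν` at the two endpoints of `[ĉₙ, ĉ₀)` gives
`ĉ₀ Λₙ = ĉ₀ (ν((ĉ₀,∞)) + dₙ) + ĉₙ ν{ĉₙ} + ∫_{(ĉₙ,ĉ₀]} x dν`.
The consistency relation for `(m, n) = (n, 0)` has `K_{n,0} = Λₙ`, hence `dₙ = d₀ Λₙ`, and dividing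
by `Λₙ` gives both claims. Here `Λₙ > 0` because the integrand `1 - x/ĉ₀` is at most
`1 - ĉₙ/ĉ₀ < 1` on a set of mass at most `1`.
-/

open MeasureTheory Set

section Atoms

variable {E : Type*} [NormedAddCommGroup E] [NormedSpace ℝ E] [CompleteSpace E]
  {ν : Measure ℝ} {f : ℝ → E} {a b : ℝ}

theorem setIntegral_Icc_eq_smul_add_setIntegral_Ioc (hf : IntegrableOn f (Icc a b) ν)
    (hab : a ≤ b) : ∫ x in Icc a b, f x ∂ν = ν.real {a} • f a + ∫ x in Ioc a b, f x ∂ν := by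
  rw [← Ioc_insert_left hab, insert_eq, setIntegral_union (by simp) measurableSet_Ioc
    (hf.mono_set (by simp [hab])) (hf.mono_set Ioc_subset_Icc_self), integral_singleton]

theorem setIntegral_Icc_eq_setIntegral_Ico_add_smul (hf : IntegrableOn f (Icc a b) ν)
    (hab : a ≤ b) : ∫ x in Icc a b, f x ∂ν = ∫ x in Ico a b, f x ∂ν + ν.real {b} • f b := by
  rw [← Ico_insert_right hab, insert_eq, union_comm, setIntegral_union (by simp)
    (measurableSet_singleton b) (hf.mono_set Ico_subset_Icc_self) (hf.mono_set (by simp [hab])),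
    integral_singleton]

end Atoms

section FiniteMeasure

variable {ν : Measure ℝ} [IsFiniteMeasure ν] {a b : ℝ}

theorem measureReal_Ici_eq_add_Ioi (a : ℝ) : ν.real (Ici a) = ν.real {a} + ν.real (Ioi a) := by
  rw [← Ioi_insert, insert_eq, measureReal_union (by simp) measurableSet_Ioi]

theorem measureReal_Ici_eq_Ico_add_Ici (hab : a ≤ b) :
    ν.real (Ici a) = ν.real (Ico a b) + ν.real (Ici b) := by
  rw [← Ico_union_Ici_eq_Ici hab, measureReal_union _ measurableSet_Ici]
  exact disjoint_left.2 fun x hx hx' => (not_le.2 hx.2) hx'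

theorem setIntegral_Ico_one_sub_div (a b : ℝ) :
    ∫ x in Ico a b, (1 - x / b) ∂ν = ν.real (Ico a b) - (∫ x in Ico a b, x ∂ν) / b := by
  have hx : IntegrableOn (fun x : ℝ => x) (Ico a b) ν :=
    continuous_id.integrableOn_Icc.mono_set Ico_subset_Icc_self
  rw [integral_sub (integrable_const 1) (hx.div_const b), integral_div,
    setIntegral_const, smul_eq_mul, mul_one]

theorem mul_measureReal_Ici_sub_setIntegral_Ico (hab : a ≤ b) (hb : b ≠ 0) :
    b * (ν.real (Ici a) - ∫ x in Ico a b, (1 - x / b) ∂ν) =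
      a * ν.real {a} + (∫ x in Ioc a b, x ∂ν) + b * ν.real (Ioi b) := by
  have hx : IntegrableOn (fun x : ℝ => x) (Icc a b) ν := continuous_id.integrableOn_Icc
  have hatoms := (setIntegral_Icc_eq_smul_add_setIntegral_Ioc hx hab).symm.trans
    (setIntegral_Icc_eq_setIntegral_Ico_add_smul hx hab)
  rw [smul_eq_mul, smul_eq_mul] at hatoms
  rw [setIntegral_Ico_one_sub_div, measureReal_Ici_eq_Ico_add_Ici hab,
    measureReal_Ici_eq_add_Ioi b, mul_sub, mul_sub, mul_div_cancel₀ _ hb]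
  linear_combination -hatoms

theorem setIntegral_Ico_one_sub_div_lt_one (ha : 0 < a) (hab : a ≤ b)
    (hmass : ν.real (Ico a b) ≤ 1) : ∫ x in Ico a b, (1 - x / b) ∂ν < 1 := by
  have hb : 0 < b := ha.trans_le hab
  have hlow : a * ν.real (Ico a b) ≤ ∫ x in Ico a b, x ∂ν :=
    setIntegral_ge_of_const_le_real measurableSet_Ico (measure_ne_top _ _) (fun x hx => hx.1)
      (continuous_id.integrableOn_Icc.mono_set Ico_subset_Icc_self)
  rw [setIntegral_Ico_one_sub_div, sub_lt_iff_lt_add, ← sub_lt_iff_lt_add', lt_div_iff₀ hb]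
  nlinarith [measureReal_nonneg (μ := ν) (s := Ico a b)]

end FiniteMeasure

theorem measure_Ioi_eq_Ici_of_Iio_eq_zero {ν : Measure ℝ} {x a : ℝ} (hxa : x < a)
    (h : ν (Iio a) = 0) : ν (Ioi x) = ν (Ici a) := by
  rw [← measure_sdiff_null h]
  congr 1
  ext y
  simp only [Set.mem_sdiff, mem_Ioi, mem_Iio, not_lt, mem_Ici]
  exact ⟨fun hy => hy.2, fun hy => ⟨hxa.trans_le hy, hy⟩⟩

section RestrictSmul

variable {α E : Type*} [MeasurableSpace α] [NormedAddCommGroup E] [NormedSpace ℝ E]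
  {μ ν : Measure α} {c : ENNReal} {s t : Set α}

theorem measureReal_eq_of_restrict_eq_smul (h : μ.restrict t = c • ν.restrict t) (hs : s ⊆ t) :
    μ.real s = c.toReal * ν.real s := by
  have := congrArg (fun m : Measure α => m.real s) h
  simpa only [measureReal_def, Measure.smul_apply, smul_eq_mul, ENNReal.toReal_mul,
    Measure.restrict_eq_self _ hs] using this

theorem setIntegral_eq_of_restrict_eq_smul (h : μ.restrict t = c • ν.restrict t) (hs : s ⊆ t)
    (f : α → E) : ∫ x in s, f x ∂μ = c.toReal • ∫ x in s, f x ∂ν := by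
  rw [← Measure.restrict_restrict_of_subset hs, h, Measure.restrict_smul, integral_smul_measure,
    Measure.restrict_restrict_of_subset hs]

end RestrictSmul

theorem stmt16_general (c : ℕ → ℝ) (hcpos : ∀ n, 0 < c n) (hanti : StrictAnti c)
    (lam : ℕ → Measure ℝ) (hfin : ∀ n, IsFiniteMeasure (lam n))
    (hcarry : ∀ n, lam n (Set.Iio (c n)) = 0)
    (d : ℕ → ℝ) (hd : ∀ n, 0 ≤ d n)
    (hmass : ∀ n, (lam n (Set.Ioi 0)).toReal + d n = 1)
    (K : ℕ → ℕ → ℝ)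
    (hK : ∀ m n, n < m →
      K m n = 1 - ∫ x in Set.Ico (c m) (c n), (1 - x / c n) ∂(lam m))
    (hdcons : ∀ m n, n < m → d n = d m / K m n)
    (Λ : ℕ → ℝ)
    (hΛ : ∀ n, Λ n = 1 - ∫ x in Set.Ico (c n) (c 0), (1 - x / c 0) ∂(lam n))
    (μ : Measure ℝ)
    (hμ : ∀ n, μ.restrict (Set.Ioi (c n)) =
      (ENNReal.ofReal (Λ n))⁻¹ • (lam n).restrict (Set.Ioi (c n))) :
    ∀ n : ℕ,
      1 / Λ n = (μ (Set.Ioi (c n))).toReal + d 0 +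
        (c 0 * (1 - (μ (Set.Ioi (c 0))).toReal - d 0) -
          ∫ x in Set.Ioc (c n) (c 0), x ∂μ) / c n ∧
      (lam n {c n}).toReal = (Λ n / c n) *
        (c 0 * (1 - (μ (Set.Ioi (c 0))).toReal - d 0) -
          ∫ x in Set.Ioc (c n) (c 0), x ∂μ) := by
  intro n
  have hab : c n ≤ c 0 := hanti.antitone n.zero_le
  have hmass_Ici : (lam n).real (Ici (c n)) + d n = 1 := by
    rw [measureReal_def, ← measure_Ioi_eq_Ici_of_Iio_eq_zero (hcpos n) (hcarry n)]
    exact hmass n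
  have hL : 0 < Λ n := by
    rw [hΛ n, sub_pos]
    refine setIntegral_Ico_one_sub_div_lt_one (hcpos n) hab ?_
    linarith [measureReal_mono (μ := lam n) (s₁ := Ico (c n) (c 0)) Ico_subset_Ici_self, hd n]
  have hdn : d n = d 0 * Λ n := by
    rcases n.eq_zero_or_pos with rfl | hn
    · simp [hΛ 0]
    · rw [hdcons n 0 hn, hK n 0 hn, ← hΛ n]
      field_simp
  have hmoment := mul_measureReal_Ici_sub_setIntegral_Ico (ν := lam n) hab (hcpos 0).ne'
  have hμ_real := fun s (hs : s ⊆ Ioi (c n)) => measureReal_eq_of_restrict_eq_smul (hμ n) hs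
  have hμ_integral := setIntegral_eq_of_restrict_eq_smul (hμ n) (s := Ioc (c n) (c 0))
    Ioc_subset_Ioi_self (fun x => x)
  rw [measureReal_Ici_eq_add_Ioi] at hmass_Ici hmoment
  simp only [← measureReal_def, hμ_real _ subset_rfl, hμ_real _ (Ioi_subset_Ioi hab),
    hμ_integral, smul_eq_mul, ENNReal.toReal_inv, ENNReal.toReal_ofReal hL.le]
  have hatom : c 0 * (1 - (Λ n)⁻¹ * (lam n).real (Ioi (c 0)) - d 0) -
      (Λ n)⁻¹ * ∫ x in Ioc (c n) (c 0), x ∂lam n = c n * (lam n).real {c n} / Λ n := by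
    field_simp
    linear_combination c 0 * hΛ n + c 0 * hdn - c 0 * hmass_Ici + hmoment
  have ha : c n ≠ 0 := (hcpos n).ne'
  rw [hatom]
  constructor
  · field_simp
    linear_combination hdn - hmass_Ici
  · field_simp

/-- Representation of the instantaneous distributions `λ⁽ⁿ⁾` in terms of the limiting
measure `μ` (denoted `λ` in the paper) and the cemetery mass `d_∂ = d 0`:
`1/Λₙ = λ((ĉₙ,∞)) + d_∂ + (ĉ₀(1 − λ((ĉ₀,∞)) − d_∂) − ∫_{(ĉₙ,ĉ₀]} x λ(dx))/ĉₙ` and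
`λ⁽ⁿ⁾({ĉₙ}) = (Λₙ/ĉₙ)·(ĉ₀(1 − λ((ĉ₀,∞)) − d_∂) − ∫_{(ĉₙ,ĉ₀]} x λ(dx))`. -/
theorem stmt16 (c : ℕ → ℝ) (hcpos : ∀ n, 0 < c n) (hanti : StrictAnti c)
    (hc0 : Filter.Tendsto c Filter.atTop (nhds 0))
    (lam : ℕ → Measure ℝ) (hfin : ∀ n, IsFiniteMeasure (lam n))
    (hcarry : ∀ n, lam n (Set.Iio (c n)) = 0)
    (d : ℕ → ℝ) (hd : ∀ n, 0 ≤ d n)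
    (hmass : ∀ n, (lam n (Set.Ioi 0)).toReal + d n = 1)
    (K : ℕ → ℕ → ℝ)
    (hK : ∀ m n, n < m →
      K m n = 1 - ∫ x in Set.Ico (c m) (c n), (1 - x / c n) ∂(lam m))
    (hcons : ∀ m n, n < m →
      lam n = (ENNReal.ofReal (K m n))⁻¹ •
        (ENNReal.ofReal ((c n)⁻¹ * ∫ x in Set.Ico (c m) (c n), x ∂(lam m)) •
            Measure.dirac (c n) +
          (lam m).restrict (Set.Ici (c n))))
    (hdcons : ∀ m n, n < m → d n = d m / K m n)
    (Λ : ℕ → ℝ)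
    (hΛ : ∀ n, Λ n = 1 - ∫ x in Set.Ico (c n) (c 0), (1 - x / c 0) ∂(lam n))
    (μ : Measure ℝ) (hμ0 : μ (Set.Iic 0) = 0)
    (hμ : ∀ n, μ.restrict (Set.Ioi (c n)) =
      (ENNReal.ofReal (Λ n))⁻¹ • (lam n).restrict (Set.Ioi (c n))) :
    ∀ n : ℕ,
      1 / Λ n = (μ (Set.Ioi (c n))).toReal + d 0 +
        (c 0 * (1 - (μ (Set.Ioi (c 0))).toReal - d 0) -
          ∫ x in Set.Ioc (c n) (c 0), x ∂μ) / c n ∧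
      (lam n {c n}).toReal = (Λ n / c n) *
        (c 0 * (1 - (μ (Set.Ioi (c 0))).toReal - d 0) -
          ∫ x in Set.Ioc (c n) (c 0), x ∂μ) :=
  stmt16_general c hcpos hanti lam hfin hcarry d hd hmass K hK hdcons Λ hΛ μ hμ
end
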